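/- Let n ≥ 3, c > 0, η = (n/(n−1))^{1/2}, and let G(w) = c w^{n−1} + ε/w − conj(w). If ε > 0 satisfies the bound ε < min{((n−2)/n)(2/(nc))^{2/(n−2)}, (1/(nc))^{2/(n−2)}(n/(n−1))^{n/(n−2)}, (1/(c(n−1)))^{2/(n−2)}((n−1)/n)^{n/(n−2)}}, then G has exactly n zeros in the open annulus η^{-1}√ε < |w| < √ε, exactly n zeros on the circle-family |w| = ρ₂ with √ε < ρ₂ < η√ε, and no zeros with |w| ≤ η^{-1}√ε. -/

import Mathlib

/-!
Multiplying `G(w) = 0` by `w` turns it into `c wⁿ = |w|² − ε`. Taking moduli, a zero of modulus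
`ρ` satisfies `c ρⁿ = |ρ² − ε|`, and conversely on every circle `|w| = ρ` where this holds the
zeros are exactly the `n` distinct roots of `wⁿ = (ρ² − ε) / c`. Inside `|w| < √ε` this equation
reads `c ρⁿ + ρ² = ε`, whose left side is increasing, so all such zeros lie on one circle `ρ₁`.
The last two bounds on `ε` are equivalent to `c ρⁿ + ρ² < ε` at `ρ = η⁻¹√ε` and `c ρⁿ + ε < ρ²`
at `ρ = η√ε`; the intermediate value theorem then places `ρ₁` in `(η⁻¹√ε, √ε)` and a root `ρ₂`
of `c ρⁿ + ε = ρ²` in `(√ε, η√ε)`.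
-/

open Set

theorem pow_lt_mul_of_lt_rpow {n : ℕ} (hn : 2 < n) {ε A r u : ℝ} (hA : 0 < A) (hr : 0 < r)
    (hu : 0 < u) (hεu : r * u ^ 2 = ε)
    (h : ε < A ^ (2 / ((n : ℝ) - 2)) * r ^ ((n : ℝ) / ((n : ℝ) - 2))) :
    u ^ n < A * ε := by
  set k : ℝ := (n : ℝ) - 2 with hk_def
  have hk : 0 < k := by rw [hk_def, sub_pos]; exact_mod_cast hn
  have hsq : u ^ 2 < (A * r) ^ (2 / k) := by
    rw [← hεu, show (n : ℝ) / k = 2 / k + 1 by field_simp; ring, Real.rpow_add hr,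
      Real.rpow_one, ← mul_assoc, ← Real.mul_rpow hA.le hr.le] at h
    exact lt_of_mul_lt_mul_right (by linarith) hr.le
  have hpow_sub : u ^ (n - 2) < A * r := by
    have := Real.rpow_lt_rpow (by positivity) hsq (by positivity : 0 < k / 2)
    rwa [← Real.rpow_natCast, ← Real.rpow_mul (by positivity), ← Real.rpow_mul (by positivity),
      show (2 / k) * (k / 2) = 1 by field_simp, Real.rpow_one, Nat.cast_ofNat,
      show (2 : ℝ) * (k / 2) = ((n - 2 : ℕ) : ℝ) by push_cast [Nat.cast_sub hn.le]; ring,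
      Real.rpow_natCast] at this
  calc u ^ n = u ^ (n - 2) * u ^ 2 := by rw [← pow_add, Nat.sub_add_cancel hn.le]
    _ < A * r * u ^ 2 := by gcongr
    _ = A * ε := by rw [← hεu]; ring

theorem strictMonoOn_mul_pow_add_sq {c : ℝ} (hc : 0 ≤ c) (n : ℕ) :
    StrictMonoOn (fun x : ℝ ↦ c * x ^ n + x ^ 2) (Ici 0) := fun a ha _ _ hab ↦ by
  have := pow_le_pow_left₀ (mem_Ici.mp ha) hab.le n
  have := pow_lt_pow_left₀ hab (mem_Ici.mp ha) two_ne_zero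
  nlinarith

theorem exists_mem_Ioo_mul_pow_add_sq_eq {n : ℕ} {c ε x : ℝ} (hc : 0 < c) (hx : 0 ≤ x)
    (h : c * x ^ n + x ^ 2 < ε) : ∃ ρ ∈ Ioo x √ε, c * ρ ^ n + ρ ^ 2 = ε := by
  have hxn := mul_nonneg hc.le (pow_nonneg hx n)
  have hε : 0 < ε := by nlinarith
  have hxs : x < √ε := (Real.lt_sqrt hx).mpr (by linarith)
  have hsqrt : ε < c * √ε ^ n + √ε ^ 2 := by
    have := Real.sqrt_pos.mpr hε
    rw [Real.sq_sqrt hε.le]; linarith [show 0 < c * √ε ^ n by positivity]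
  exact intermediate_value_Ioo hxs.le (by fun_prop) ⟨h, hsqrt⟩

theorem exists_mem_Ioo_mul_pow_add_eq_sq {n : ℕ} {c ε y : ℝ} (hc : 0 < c) (hε : 0 < ε)
    (hy : 0 ≤ y) (h : c * y ^ n + ε < y ^ 2) : ∃ ρ ∈ Ioo √ε y, c * ρ ^ n + ε = ρ ^ 2 := by
  have hyn := mul_nonneg hc.le (pow_nonneg hy n)
  have hsy : √ε < y := (Real.sqrt_lt' (by nlinarith)).mpr (by linarith)
  have hsqrt : 0 < c * √ε ^ n + ε - √ε ^ 2 := by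
    have := Real.sqrt_pos.mpr hε
    rw [Real.sq_sqrt hε.le]; linarith [show 0 < c * √ε ^ n by positivity]
  obtain ⟨ρ, hρ, hρ0⟩ := intermediate_value_Ioo' hsy.le
    (f := fun x ↦ c * x ^ n + ε - x ^ 2) (by fun_prop) ⟨by linarith, hsqrt⟩
  exact ⟨ρ, hρ, sub_eq_zero.mp hρ0⟩

theorem exists_inner_radius {n : ℕ} (hn : 2 < n) {c ε : ℝ} (hc : 0 < c) (hε : 0 < ε)
    (h : ε < (1 / ((n : ℝ) * c)) ^ ((2 : ℝ) / ((n : ℝ) - 2)) *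
      ((n : ℝ) / ((n : ℝ) - 1)) ^ ((n : ℝ) / ((n : ℝ) - 2))) :
    ∃ ρ ∈ Ioo ((√((n : ℝ) / ((n : ℝ) - 1)))⁻¹ * √ε) √ε, c * ρ ^ n + ρ ^ 2 = ε := by
  have hn1 : (1 : ℝ) < n := by exact_mod_cast hn.trans' one_lt_two
  have hn1' : (n : ℝ) - 1 ≠ 0 := by linarith
  have hr : 0 < (n : ℝ) / ((n : ℝ) - 1) := div_pos (by linarith) (by linarith)
  set x := (√((n : ℝ) / ((n : ℝ) - 1)))⁻¹ * √ε
  have hx : (n : ℝ) / ((n : ℝ) - 1) * x ^ 2 = ε := by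
    rw [mul_pow, inv_pow, Real.sq_sqrt hr.le, Real.sq_sqrt hε.le]; field_simp
  have hxn : c * x ^ n < ε / n := by
    calc c * x ^ n < c * (1 / (n * c) * ε) := by
          gcongr; exact pow_lt_mul_of_lt_rpow hn (by positivity) hr (by positivity) hx h
      _ = ε / n := by field_simp
  refine exists_mem_Ioo_mul_pow_add_sq_eq hc (by positivity) ?_
  have hx2 : x ^ 2 = ε - ε / n := by rw [← hx]; field_simp
  linarith

theorem exists_outer_radius {n : ℕ} (hn : 2 < n) {c ε : ℝ} (hc : 0 < c) (hε : 0 < ε)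
    (h : ε < (1 / (c * ((n : ℝ) - 1))) ^ ((2 : ℝ) / ((n : ℝ) - 2)) *
      (((n : ℝ) - 1) / n) ^ ((n : ℝ) / ((n : ℝ) - 2))) :
    ∃ ρ ∈ Ioo √ε (√((n : ℝ) / ((n : ℝ) - 1)) * √ε), c * ρ ^ n + ε = ρ ^ 2 := by
  have hn1 : (1 : ℝ) < n := by exact_mod_cast hn.trans' one_lt_two
  have hn1' : (n : ℝ) - 1 ≠ 0 := by linarith
  have hr : 0 < ((n : ℝ) - 1) / n := div_pos (by linarith) (by linarith)
  set y := √((n : ℝ) / ((n : ℝ) - 1)) * √ε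
  have hy : ((n : ℝ) - 1) / n * y ^ 2 = ε := by
    rw [mul_pow, Real.sq_sqrt (by positivity), Real.sq_sqrt hε.le]; field_simp
  have hyn : c * y ^ n < ε / (n - 1) := by
    calc c * y ^ n < c * (1 / (c * (n - 1)) * ε) := by
          gcongr; exact pow_lt_mul_of_lt_rpow hn (by positivity) hr (by positivity) hy h
      _ = ε / (n - 1) := by field_simp
  refine exists_mem_Ioo_mul_pow_add_eq_sq hc hε (by positivity) ?_
  have hy2 : y ^ 2 = ε + ε / (n - 1) := by rw [← hy]; field_simp; ring
  linarith

theorem ncard_setOf_pow_eq {n : ℕ} (hn : n ≠ 0) {a : ℂ} (ha : a ≠ 0) :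
    {w : ℂ | w ^ n = a}.ncard = n := by
  classical
  have hζ := Complex.isPrimitiveRoot_exp n hn
  have hroots : {w : ℂ | w ^ n = a} = ↑(Polynomial.nthRootsFinset n a) := by
    ext w; simp [Polynomial.mem_nthRootsFinset (Nat.pos_of_ne_zero hn)]
  rw [hroots, Set.ncard_coe_finset, Polynomial.nthRootsFinset_def,
    Multiset.toFinset_card_of_nodup (hζ.nthRoots_nodup ha), hζ.card_nthRoots,
    if_pos (IsAlgClosed.exists_pow_nat_eq a (Nat.pos_of_ne_zero hn))]

noncomputable def G (n : ℕ) (c ε : ℝ) (w : ℂ) : ℂ := c * w ^ (n - 1) + ε / w - starRingEnd ℂ w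

section G

variable {n : ℕ} {c ε : ℝ} {w : ℂ}

theorem G_eq_zero_iff (hn : n ≠ 0) (hw : w ≠ 0) :
    G n c ε w = 0 ↔ (c : ℂ) * w ^ n = ((‖w‖ ^ 2 - ε : ℝ) : ℂ) := by
  have hpow : w ^ n = w ^ (n - 1) * w := by rw [← pow_succ, Nat.sub_add_cancel (by omega)]
  have hconj : starRingEnd ℂ w * w = ((‖w‖ ^ 2 : ℝ) : ℂ) := by
    rw [mul_comm, Complex.mul_conj, Complex.sq_norm]
  have hGw : G n c ε w * w = c * w ^ n + ε - ((‖w‖ ^ 2 : ℝ) : ℂ) := by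
    rw [G, hpow, ← hconj]; field_simp
  rw [← mul_left_inj' hw, zero_mul, hGw, Complex.ofReal_sub, sub_eq_zero]
  exact eq_sub_iff_add_eq.symm

theorem mul_norm_pow_eq_abs_of_G_eq_zero (hn : n ≠ 0) (hc : 0 ≤ c) (hw : w ≠ 0)
    (hG : G n c ε w = 0) : c * ‖w‖ ^ n = |‖w‖ ^ 2 - ε| := by
  have := congrArg norm ((G_eq_zero_iff hn hw).mp hG)
  rwa [norm_mul, norm_pow, Complex.norm_real, Complex.norm_real, Real.norm_of_nonneg hc,
    Real.norm_eq_abs] at this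

theorem norm_eq_of_G_eq_zero_of_norm_lt_sqrt (hn : n ≠ 0) (hc : 0 ≤ c) {ρ : ℝ} (hρ : 0 ≤ ρ)
    (hρε : c * ρ ^ n + ρ ^ 2 = ε) (hw : w ≠ 0) (hG : G n c ε w = 0) (hlt : ‖w‖ < √ε) :
    ‖w‖ = ρ := by
  have hsq := (Real.lt_sqrt (norm_nonneg w)).mp hlt
  have hnorm := mul_norm_pow_eq_abs_of_G_eq_zero hn hc hw hG
  rw [abs_of_neg (sub_neg.mpr hsq)] at hnorm
  exact (strictMonoOn_mul_pow_add_sq hc n).injOn (norm_nonneg w) hρ (by linarith)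

theorem setOf_G_eq_zero_norm_eq (hn : n ≠ 0) (hc : 0 < c) {ρ : ℝ} (hρ : 0 < ρ)
    (hρε : c * ρ ^ n = |ρ ^ 2 - ε|) :
    {w | w ≠ 0 ∧ G n c ε w = 0 ∧ ‖w‖ = ρ} = {w : ℂ | w ^ n = ((ρ ^ 2 - ε) / c : ℝ)} := by
  ext w
  constructor
  · rintro ⟨hw, hG, rfl⟩
    show w ^ n = _
    rw [Complex.ofReal_div, eq_div_iff (by exact_mod_cast hc.ne'), mul_comm]
    exact (G_eq_zero_iff hn hw).mp hG
  · intro hwn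
    have hnorm : ‖w‖ = ρ := by
      refine (pow_left_inj₀ (norm_nonneg w) hρ.le hn).mp ?_
      rw [← norm_pow, hwn, Complex.norm_real, Real.norm_eq_abs, abs_div,
        abs_of_pos hc, ← hρε, mul_div_cancel_left₀ _ hc.ne']
    have hw : w ≠ 0 := by rintro rfl; simp [hρ.ne] at hnorm
    refine ⟨hw, (G_eq_zero_iff hn hw).mpr ?_, hnorm⟩
    rw [hnorm, hwn, ← Complex.ofReal_mul, mul_div_cancel₀ _ hc.ne']

theorem ncard_setOf_G_eq_zero_norm_eq (hn : n ≠ 0) (hc : 0 < c) {ρ : ℝ} (hρ : 0 < ρ)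
    (hρε : c * ρ ^ n = |ρ ^ 2 - ε|) :
    {w | w ≠ 0 ∧ G n c ε w = 0 ∧ ‖w‖ = ρ}.ncard = n := by
  rw [setOf_G_eq_zero_norm_eq hn hc hρ hρε]
  refine ncard_setOf_pow_eq hn (Complex.ofReal_ne_zero.mpr (div_ne_zero ?_ hc.ne'))
  rw [← abs_ne_zero, ← hρε]
  positivity

end G

/-- Location of the zeros of `G(w) = c w^{n-1} + ε/w − conj w` for small `ε`:
exactly `n` zeros in the annulus `η⁻¹√ε < |w| < √ε` (with `η = √(n/(n-1))`), exactly `n`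
zeros on a circle `|w| = ρ₂` with `√ε < ρ₂ < η√ε`, and no zeros with `|w| ≤ η⁻¹√ε`. -/
theorem location_of_zeros_G (n : ℕ) (hn : 3 ≤ n) (c ε : ℝ) (hc : 0 < c) (hε : 0 < ε)
    (hεb : ε < min (((n : ℝ) - 2) / n * (2 / (n * c)) ^ ((2 : ℝ) / ((n : ℝ) - 2)))
      (min ((1 / (n * c)) ^ ((2 : ℝ) / ((n : ℝ) - 2)) *
          ((n : ℝ) / ((n : ℝ) - 1)) ^ ((n : ℝ) / ((n : ℝ) - 2)))
        ((1 / (c * ((n : ℝ) - 1))) ^ ((2 : ℝ) / ((n : ℝ) - 2)) *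
          (((n : ℝ) - 1) / n) ^ ((n : ℝ) / ((n : ℝ) - 2))))) :
    Set.ncard {w : ℂ | w ≠ 0 ∧
        (c : ℂ) * w ^ (n - 1) + (ε : ℂ) / w - (starRingEnd ℂ) w = 0 ∧
        (Real.sqrt ((n : ℝ) / ((n : ℝ) - 1)))⁻¹ * Real.sqrt ε < ‖w‖ ∧
        ‖w‖ < Real.sqrt ε} = n ∧
    (∃ ρ₂ : ℝ, Real.sqrt ε < ρ₂ ∧
      ρ₂ < Real.sqrt ((n : ℝ) / ((n : ℝ) - 1)) * Real.sqrt ε ∧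
      Set.ncard {w : ℂ | w ≠ 0 ∧
        (c : ℂ) * w ^ (n - 1) + (ε : ℂ) / w - (starRingEnd ℂ) w = 0 ∧
        ‖w‖ = ρ₂} = n) ∧
    ∀ w : ℂ, w ≠ 0 →
      ‖w‖ ≤ (Real.sqrt ((n : ℝ) / ((n : ℝ) - 1)))⁻¹ * Real.sqrt ε →
      (c : ℂ) * w ^ (n - 1) + (ε : ℂ) / w - (starRingEnd ℂ) w ≠ 0 := by
  have hn0 : n ≠ 0 := by omega
  simp only [show ∀ w : ℂ, (c : ℂ) * w ^ (n - 1) + (ε : ℂ) / w - (starRingEnd ℂ) w = G n c ε w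
    from fun _ ↦ rfl]
  obtain ⟨ρ₁, ⟨hxρ₁, hρ₁ε⟩, hρ₁⟩ := exists_inner_radius hn hc hε
    (hεb.trans_le ((min_le_right _ _).trans (min_le_left _ _)))
  obtain ⟨ρ₂, ⟨hερ₂, hρ₂y⟩, hρ₂⟩ := exists_outer_radius hn hc hε
    (hεb.trans_le ((min_le_right _ _).trans (min_le_right _ _)))
  have hρ₁0 : 0 < ρ₁ := lt_of_le_of_lt (by positivity) hxρ₁
  have hρ₂0 : 0 < ρ₂ := (Real.sqrt_nonneg ε).trans_lt hερ₂
  have hinner {w : ℂ} (hw : w ≠ 0) (hG : G n c ε w = 0) (hlt : ‖w‖ < √ε) : ‖w‖ = ρ₁ :=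
    norm_eq_of_G_eq_zero_of_norm_lt_sqrt hn0 hc.le hρ₁0.le hρ₁ hw hG hlt
  refine ⟨?_, ⟨ρ₂, hερ₂, hρ₂y, ncard_setOf_G_eq_zero_norm_eq hn0 hc hρ₂0 ?_⟩, ?_⟩
  · convert ncard_setOf_G_eq_zero_norm_eq hn0 hc hρ₁0 (ε := ε) ?_ using 2
    · ext w
      refine ⟨fun ⟨hw, hG, _, hlt⟩ ↦ ⟨hw, hG, hinner hw hG hlt⟩, ?_⟩
      rintro ⟨hw, hG, rfl⟩
      exact ⟨hw, hG, hxρ₁, hρ₁ε⟩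
    · rw [← hρ₁, sub_add_cancel_right, abs_neg, abs_of_pos (by positivity)]
  · rw [← hρ₂, add_sub_cancel_right, abs_of_pos (by positivity)]
  · intro w hw hle hG
    exact hle.not_gt (hinner hw hG (hle.trans_lt (hxρ₁.trans hρ₁ε)) ▸ hxρ₁)
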